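/- Let Γ be the infinite d-regular tree rooted at ρ (root has d children, every other vertex has d−1 children) and consider bond percolation with parameter p ≤ 1/(d−1), d ≥ 3. Let L_k be the set of percolation-connected vertices at level k. Then P(L_k ≠ ∅) ≤ 6/k for all k ≥ 1. -/

import Mathlib

/-- The edges of the first `k` levels of the rooted `d`-regular tree (the root
has `d` children, every other vertex has `d-1` children): an edge is indexed by
its lower endpoint, a vertex at level `j+1` for some `j < k`, which is reached
from the root by a first step in `Fin d` followed by `j` steps in `Fin (d-1)`. -/
def TreeEdge (d k : ℕ) : Type :=
  Σ j : Fin k, Fin d × (Fin j.val → Fin (d - 1))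

instance (d k : ℕ) : DecidableEq (TreeEdge d k) := by
  unfold TreeEdge; infer_instance

instance (d k : ℕ) : Fintype (TreeEdge d k) := by
  unfold TreeEdge; infer_instance

/-- The level-`k` vertex given by first step `a` and subsequent steps `f` is
connected to the root in the percolation configuration `ω` (each edge `e` is
retained iff `ω e = true`) iff all `k` edges on its ancestral path are retained. -/
def ConnectedAtLevel (d k : ℕ) (ω : TreeEdge d k → Bool)
    (a : Fin d) (f : Fin (k - 1) → Fin (d - 1)) : Prop :=
  ∀ j : Fin k,
    ω ⟨j, a, fun i => f ⟨i.val, Nat.lt_of_lt_of_le i.isLt (Nat.le_pred_of_lt j.isLt)⟩⟩ = true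

open scoped Classical in
/-- `P(L_k ≠ ∅)`: the probability, under bond percolation with parameter `p` on
the rooted `d`-regular tree, that some vertex at level `k` is connected to the
root. Since this event depends only on the (finitely many) edges of the first
`k` levels, it is a finite sum of weights of configurations. -/
noncomputable def probLevelNonempty (d k : ℕ) (p : ℝ) : ℝ :=
  ∑ ω : TreeEdge d k → Bool,
    if ∃ a f, ConnectedAtLevel d k ω a f then ∏ e, (if ω e then p else 1 - p) else 0

open Finset

section PRbasic
open scoped Classical

noncomputable def pr {E : Type} [DecidableEq E] [Fintype E] (p : ℝ) (A : (E → Bool) → Prop) : ℝ :=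
  ∑ ω : E → Bool, if A ω then ∏ e, (if ω e then p else 1 - p) else 0

lemma pr_congr {E : Type} [DecidableEq E] [Fintype E] (p : ℝ) {A B : (E → Bool) → Prop}
    (h : ∀ ω, A ω ↔ B ω) : pr p A = pr p B := by
  unfold pr
  refine Finset.sum_congr rfl fun ω _ => ?_
  simp only [h ω]

lemma sum_wt {E : Type} [DecidableEq E] [Fintype E] (p : ℝ) :
    ∑ ω : E → Bool, ∏ e, (if ω e then p else 1 - p) = 1 := by
  have := (Fintype.prod_sum (fun (_ : E) (b : Bool) => if b then p else 1 - p)).symm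
  simp only [Fintype.sum_bool, if_true, if_false] at this
  rw [this]
  simp

lemma pr_not {E : Type} [DecidableEq E] [Fintype E] (p : ℝ) (A : (E → Bool) → Prop) :
    pr p (fun ω => ¬ A ω) = 1 - pr p A := by
  have key : pr p (fun ω => ¬ A ω) + pr p A = 1 := by
    unfold pr
    rw [← Finset.sum_add_distrib]
    conv_rhs => rw [← sum_wt (E := E) p]
    refine Finset.sum_congr rfl fun ω _ => ?_
    by_cases h : A ω <;> simp [h]
  linarith

lemma pr_reindex {E F : Type} [DecidableEq E] [DecidableEq F] [Fintype E] [Fintype F] (e : E ≃ F) (p : ℝ)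
    (A : (E → Bool) → Prop) :
    pr p A = pr p (fun ω : F → Bool => A (fun x => ω (e x))) := by
  unfold pr
  refine Fintype.sum_equiv (Equiv.arrowCongr e (Equiv.refl Bool)) _ _ fun ω => ?_
  beta_reduce
  have h1 : (fun x => (Equiv.arrowCongr e (Equiv.refl Bool)) ω (e x)) = ω := by
    funext x; simp
  rw [h1]
  congr 1
  refine (Fintype.prod_equiv e _ _ fun x => ?_)
  simp

lemma ite_forall_prod {ι : Type} [Fintype ι] (P : ι → Prop) (c : ι → ℝ) :
    (if (∀ a, P a) then ∏ a, c a else 0) = ∏ a, (if P a then c a else 0) := by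
  by_cases h : ∀ a, P a
  · rw [if_pos h]; exact Finset.prod_congr rfl fun a _ => (if_pos (h a)).symm
  · rw [if_neg h]
    push_neg at h
    obtain ⟨a, ha⟩ := h
    refine (Finset.prod_eq_zero (Finset.mem_univ a) ?_).symm
    exact if_neg ha

lemma pr_pi {β : Type} [DecidableEq β] [Fintype β] (r : ℕ) (p : ℝ) (B : (β → Bool) → Prop) :
    pr p (fun ω : Fin r × β → Bool => ∀ a, B (fun x => ω (a, x))) = (pr p B) ^ r := by
  classical
  unfold pr
  refine Eq.trans (Fintype.sum_equiv (Equiv.curry (Fin r) β Bool) _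
    (fun g : Fin r → (β → Bool) =>
      ∏ a, (if B (g a) then ∏ x, (if g a x then p else 1 - p) else 0)) fun ω => ?_) ?_
  · by_cases h : ∀ a, B (fun x => ω (a, x))
    · rw [if_pos h]
      rw [show (∏ e : Fin r × β, (if ω e then p else 1 - p))
          = ∏ a, ∏ x, (if ω (a, x) then p else 1 - p) from Fintype.prod_prod_type _]
      refine Finset.prod_congr rfl fun a _ => ?_
      exact (if_pos (h a)).symm
    · rw [if_neg h]
      push_neg at h
      obtain ⟨a, ha⟩ := h
      refine (Finset.prod_eq_zero (Finset.mem_univ a) ?_).symm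
      exact if_neg ha
  · rw [show (∑ g : Fin r → (β → Bool), ∏ a,
          (if B (g a) then ∏ x, (if g a x then p else 1 - p) else 0))
        = ∏ _a : Fin r, ∑ h : β → Bool,
          (if B h then ∏ x, (if h x then p else 1 - p) else 0) from
      (Fintype.prod_sum (fun (_ : Fin r) (h : β → Bool) =>
        if B h then ∏ x, (if h x then p else 1 - p) else 0)).symm]
    rw [Finset.prod_const, Finset.card_univ, Fintype.card_fin]

lemma pr_root {β : Type} [DecidableEq β] [Fintype β] (p : ℝ) (B : (β → Bool) → Prop) :
    pr p (fun ω : Unit ⊕ β → Bool =>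
      ω (Sum.inl ()) = true ∧ B (fun x => ω (Sum.inr x))) = p * pr p B := by
  classical
  let e : Bool × (β → Bool) ≃ (Unit ⊕ β → Bool) :=
    { toFun := fun q => Sum.elim (fun _ => q.1) q.2
      invFun := fun ω => (ω (Sum.inl ()), fun x => ω (Sum.inr x))
      left_inv := fun q => rfl
      right_inv := fun ω => by
        funext z
        cases z with
        | inl u => cases u; rfl
        | inr x => rfl }
  unfold pr
  refine Eq.trans (Fintype.sum_equiv e.symm _
    (fun q : Bool × (β → Bool) =>
      (if q.1 = true then (1:ℝ) else 0) *
        (if B q.2 then ∏ x, (if q.2 x then p else 1 - p) else 0) * (if q.1 then p else 1 - p))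
    fun ω => ?_) ?_
  · have h1 : e.symm ω = (ω (Sum.inl ()), fun x => ω (Sum.inr x)) := rfl
    rw [h1]
    beta_reduce
    have hsplit : (∏ y : Unit ⊕ β, (if ω y then p else 1 - p))
        = (∏ _u : Unit, (if ω (Sum.inl ()) then p else 1 - p))
          * ∏ x, (if ω (Sum.inr x) then p else 1 - p) := Fintype.prod_sum_type _
    by_cases hb : ω (Sum.inl ()) = true
    · by_cases hB : B (fun x => ω (Sum.inr x))
      · rw [if_pos ⟨hb, hB⟩, if_pos hb, if_pos hB, hsplit, Fintype.prod_unique, hb]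
        simp [mul_comm]
      · rw [if_neg (fun hc => hB hc.2), if_neg hB]
        ring
    · rw [if_neg (fun hc => hb hc.1), if_neg hb]
      ring
  · rw [Fintype.sum_prod_type, Fintype.sum_bool]
    simp [Finset.mul_sum, mul_comm, mul_assoc, mul_left_comm]

/-- Generalized tree edges: root has `r` children, all other vertices `m` children. -/
def TE (r m k : ℕ) : Type :=
  Σ j : Fin k, Fin r × (Fin j.val → Fin m)

instance (r m k : ℕ) : DecidableEq (TE r m k) := by
  unfold TE; infer_instance

instance (r m k : ℕ) : Fintype (TE r m k) := by
  unfold TE; infer_instance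

def ConnG (r m k : ℕ) (ω : TE r m k → Bool) : Prop :=
  ∃ (a : Fin r) (f : Fin (k - 1) → Fin m), ∀ j : Fin k,
    ω ⟨j, a, fun i => f ⟨i.val, Nat.lt_of_lt_of_le i.isLt (Nat.le_pred_of_lt j.isLt)⟩⟩ = true

/-- Decomposition of the first `k+1` levels: the `r` root edges, and below each
of them an `m`-ary tree with `k` levels. -/
def treeEquiv (r m k : ℕ) : TE r m (k + 1) ≃ Fin r × (Unit ⊕ TE m m k) where
  toFun x :=
    match x with
    | ⟨⟨0, _⟩, a, _⟩ => (a, Sum.inl ())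
    | ⟨⟨j + 1, hj⟩, a, f⟩ =>
        (a, Sum.inr ⟨⟨j, Nat.lt_of_succ_lt_succ hj⟩, f ⟨0, Nat.zero_lt_succ j⟩,
          fun t => f ⟨t.val + 1, Nat.succ_lt_succ t.isLt⟩⟩)
  invFun y :=
    match y with
    | (a, Sum.inl ()) => ⟨⟨0, Nat.zero_lt_succ k⟩, a, fun t => absurd t.isLt (Nat.not_lt_zero _)⟩
    | (a, Sum.inr ⟨j, b, g⟩) =>
        ⟨⟨j.val + 1, Nat.succ_lt_succ j.isLt⟩, a, fun t =>
          match t with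
          | ⟨0, _⟩ => b
          | ⟨i + 1, hi⟩ => g ⟨i, Nat.lt_of_succ_lt_succ hi⟩⟩
  left_inv := by
    rintro ⟨⟨j, hj⟩, a, f⟩
    match j with
    | 0 =>
        simp only
        congr 1
        congr 1
        funext t
        exact absurd t.isLt (Nat.not_lt_zero _)
    | j + 1 =>
        simp only
        congr 1
        congr 1
        funext t
        match t with
        | ⟨0, _⟩ => rfl
        | ⟨i + 1, hi⟩ => rfl
  right_inv := by
    rintro ⟨a, y⟩
    match y with
    | Sum.inl () => rfl
    | Sum.inr ⟨j, b, g⟩ => rfl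

lemma conn_succ_iff (r m k : ℕ) (hm : 1 ≤ m) (ω' : Fin r × (Unit ⊕ TE m m k) → Bool) :
    ConnG r m (k + 1) (fun x => ω' (treeEquiv r m k x)) ↔
      ∃ a : Fin r, ω' (a, Sum.inl ()) = true ∧
        ConnG m m k (fun y => ω' (a, Sum.inr y)) := by
  constructor
  · rintro ⟨a, f, H⟩
    refine ⟨a, ?_, ?_⟩
    · exact H ⟨0, Nat.zero_lt_succ k⟩
    · match k with
      | 0 => exact ⟨⟨0, hm⟩, (fun i => absurd i.isLt (Nat.not_lt_zero _)), fun j => j.elim0⟩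
      | k' + 1 =>
          refine ⟨f ⟨0, Nat.zero_lt_succ k'⟩,
            (fun i => f ⟨i.val + 1, Nat.succ_lt_succ (Nat.lt_of_lt_of_le i.isLt (by omega))⟩),
            fun j => ?_⟩
          exact H ⟨j.val + 1, Nat.succ_lt_succ j.isLt⟩
  · rintro ⟨a, h0, hc⟩
    match k with
    | 0 =>
        refine ⟨a, (fun i => absurd i.isLt (Nat.not_lt_zero _)), fun j => ?_⟩
        match j with
        | ⟨0, _⟩ => exact h0
    | k' + 1 =>
        obtain ⟨b, g, Hg⟩ := hc
        refine ⟨a, (fun i =>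
          match i with
          | ⟨0, _⟩ => b
          | ⟨t + 1, ht⟩ => g ⟨t, by omega⟩), fun j => ?_⟩
        match j with
        | ⟨0, _⟩ => exact h0
        | ⟨jv + 1, hjv⟩ => exact Hg ⟨jv, by omega⟩

lemma pr_conn_zero (m : ℕ) (hm : 1 ≤ m) (p : ℝ) : pr p (ConnG m m 0) = 1 := by
  classical
  haveI : IsEmpty (TE m m 0) := ⟨fun x => x.1.elim0⟩
  unfold pr
  have h1 : ∀ ω : TE m m 0 → Bool,
      (if ConnG m m 0 ω then ∏ e, (if ω e then p else 1 - p) else 0) = 1 := by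
    intro ω
    rw [if_pos ⟨⟨0, hm⟩, (fun i => absurd i.isLt (Nat.not_lt_zero _)), fun j => j.elim0⟩]
    exact Finset.prod_of_isEmpty _
  rw [Finset.sum_congr rfl fun ω _ => h1 ω, Finset.sum_const, Finset.card_univ]
  simp

lemma pr_conn_succ (r m k : ℕ) (hm : 1 ≤ m) (p : ℝ) :
    pr p (ConnG r m (k + 1)) = 1 - (1 - p * pr p (ConnG m m k)) ^ r := by
  classical
  rw [pr_reindex (treeEquiv r m k) p (ConnG r m (k + 1))]
  rw [pr_congr p (fun ω' => (conn_succ_iff r m k hm ω'))]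
  have hnot : pr p (fun ω' : Fin r × (Unit ⊕ TE m m k) → Bool =>
      ¬ ¬ ∃ a : Fin r, ω' (a, Sum.inl ()) = true ∧
        ConnG m m k (fun y => ω' (a, Sum.inr y)))
      = 1 - pr p (fun ω' => ¬ ∃ a : Fin r, ω' (a, Sum.inl ()) = true ∧
        ConnG m m k (fun y => ω' (a, Sum.inr y))) := pr_not p _
  rw [← pr_congr p (fun ω' => not_not (a := ∃ a : Fin r, ω' (a, Sum.inl ()) = true ∧
        ConnG m m k (fun y => ω' (a, Sum.inr y)))), hnot]
  congr 1
  rw [pr_congr p (fun ω' => not_exists (p := fun a : Fin r => ω' (a, Sum.inl ()) = true ∧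
        ConnG m m k (fun y => ω' (a, Sum.inr y))))]
  rw [pr_pi (β := Unit ⊕ TE m m k) r p
    (fun η => ¬ (η (Sum.inl ()) = true ∧ ConnG m m k (fun y => η (Sum.inr y))))]
  rw [pr_not p (fun η : Unit ⊕ TE m m k → Bool =>
    (η (Sum.inl ()) = true ∧ ConnG m m k (fun y => η (Sum.inr y))))]
  rw [pr_root p (ConnG m m k)]

noncomputable def V (m : ℕ) (p : ℝ) : ℕ → ℝ
  | 0 => 1
  | n + 1 => 1 - (1 - p * V m p n) ^ m

lemma pr_conn_eq_V (m : ℕ) (hm : 1 ≤ m) (p : ℝ) :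
    ∀ k, pr p (ConnG m m k) = V m p k := by
  intro k
  induction k with
  | zero => rw [pr_conn_zero m hm p]; rfl
  | succ n ih => rw [pr_conn_succ m m n hm p, ih]; rfl

lemma cube_cast_nonneg (n : ℕ) : 0 ≤ (n : ℝ) * ((n : ℝ) - 1) * ((n : ℝ) - 2) := by
  match n with
  | 0 => norm_num
  | 1 => norm_num
  | n + 2 =>
      have hx : (0 : ℝ) ≤ (n : ℝ) := Nat.cast_nonneg n
      have h3 : (0 : ℝ) ≤ ((n : ℝ) + 2) * ((n : ℝ) + 1) * (n : ℝ) :=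
        mul_nonneg (mul_nonneg (by linarith) (by linarith)) hx
      push_cast
      nlinarith [h3]

lemma key_poly (m : ℕ) (t : ℝ) (ht : 0 ≤ t) (ht1 : t ≤ 1) :
    1 - m * t + (m * (m - 1) / 2) * t ^ 2 - (m * (m - 1) * (m - 2) / 6) * t ^ 3
      ≤ (1 - t) ^ m := by
  induction m with
  | zero => norm_num
  | succ n ih =>
      have h1 : (0 : ℝ) ≤ 1 - t := by linarith
      have h2 := mul_le_mul_of_nonneg_left ih h1
      have h3 : (1 - t) * (1 - t) ^ n = (1 - t) ^ (n + 1) := (pow_succ' (1 - t) n).symm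
      have hc := cube_cast_nonneg n
      have hN : (0 : ℝ) ≤ (n : ℝ) := Nat.cast_nonneg n
      have hq : (0 : ℝ) ≤ (n : ℝ) * ((n : ℝ) - 1) := by
        match n with
        | 0 => norm_num
        | n + 1 => push_cast; nlinarith [Nat.cast_nonneg (α := ℝ) n]
      push_cast
      push_cast at h2
      nlinarith [pow_nonneg ht 4, pow_nonneg ht 3, mul_nonneg hc (pow_nonneg ht 4)]

lemma key_ineq (m : ℕ) (hm : 2 ≤ m) (x : ℝ) (h0 : 0 ≤ x) (h1 : x ≤ 1) :
    1 - x + x ^ 2 / 4 ≤ (1 - x / m) ^ m := by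
  have hM : (2 : ℝ) ≤ (m : ℝ) := by exact_mod_cast hm
  have hMpos : (0 : ℝ) < m := by linarith
  have ht0 : 0 ≤ x / m := div_nonneg h0 (le_of_lt hMpos)
  have ht1 : x / m ≤ 1 := by
    rw [div_le_one hMpos]; linarith
  have hkp := key_poly m (x / m) ht0 ht1
  have hx3 : x ^ 3 ≤ x ^ 2 := by nlinarith
  have hexp : (m : ℝ) * (x / m) = x := by field_simp
  -- rewrite the polynomial lower bound in terms of x
  have h2 : 1 - x + ((m : ℝ) - 1) / (2 * m) * x ^ 2
      - ((m : ℝ) - 1) * ((m : ℝ) - 2) / (6 * m ^ 2) * x ^ 3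
      ≤ (1 - x / m) ^ m := by
    refine le_trans (le_of_eq ?_) hkp
    field_simp
  refine le_trans ?_ h2
  -- need: 1 - x + x²/4 ≤ 1 - x + ((m-1)/(2m))x² - ((m-1)(m-2)/(6m²))x³
  have hcoef : ((m : ℝ) - 1) / (2 * m) - ((m : ℝ) - 1) * ((m : ℝ) - 2) / (6 * m ^ 2) ≥ 1 / 4 := by
    rw [ge_iff_le, div_sub_div _ _ (by positivity) (by positivity), div_le_div_iff₀ (by norm_num) (by positivity)]
    nlinarith
  have hx2 : (0 : ℝ) ≤ x ^ 2 := sq_nonneg x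
  have hc2 : (0 : ℝ) ≤ ((m : ℝ) - 1) * ((m : ℝ) - 2) / (6 * m ^ 2) := by
    apply div_nonneg; nlinarith; positivity
  nlinarith [mul_le_mul_of_nonneg_left hx3 hc2]

lemma V_bounds (m : ℕ) (hm : 2 ≤ m) (p : ℝ) (hp0 : 0 ≤ p) (hp : p ≤ 1 / (m : ℝ)) :
    ∀ n, 0 ≤ V m p n ∧ V m p n ≤ 1 ∧ V m p n ≤ 4 / ((n : ℝ) + 4) := by
  have hM : (2 : ℝ) ≤ (m : ℝ) := by exact_mod_cast hm
  have hMpos : (0 : ℝ) < m := by linarith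
  intro n
  induction n with
  | zero => refine ⟨by norm_num [V], by norm_num [V], by norm_num [V]⟩
  | succ n ih =>
      obtain ⟨h0, h1, h4⟩ := ih
      set v := V m p n with hv
      have hpv0 : 0 ≤ p * v := mul_nonneg hp0 h0
      have hpv1 : p * v ≤ 1 := by
        have : p * v ≤ (1 / (m : ℝ)) * 1 := by
          apply mul_le_mul hp h1 h0 (by positivity)
        have h2 : (1 : ℝ) / (m : ℝ) ≤ 1 / 2 := by
          apply div_le_div_of_nonneg_left <;> linarith
        linarith
      have hVs : V m p (n + 1) = 1 - (1 - p * v) ^ m := rfl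
      have hpow0 : (0 : ℝ) ≤ (1 - p * v) ^ m := pow_nonneg (by linarith) m
      have hpow1 : (1 - p * v) ^ m ≤ 1 := by
        apply pow_le_one₀ <;> linarith
      refine ⟨by rw [hVs]; linarith, by rw [hVs]; linarith, ?_⟩
      -- monotone comparison with x/m
      have hle : p * v ≤ v / m := by
        rw [div_eq_mul_inv, mul_comm v]
        apply mul_le_mul _ (le_refl v) h0 (by positivity)
        rwa [← one_div]
      have hvm1 : v / m ≤ 1 := by
        rw [div_le_one hMpos]; linarith
      have hmono : (1 - v / m) ^ m ≤ (1 - p * v) ^ m := by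
        apply pow_le_pow_left₀ (by linarith) (by linarith)
      have hkey := key_ineq m hm v h0 h1
      have hstep : V m p (n + 1) ≤ v - v ^ 2 / 4 := by
        rw [hVs]; nlinarith
      -- now the recursive numeric bound
      have hN : (0 : ℝ) ≤ (n : ℝ) := Nat.cast_nonneg n
      have hbnd : v - v ^ 2 / 4 ≤ 4 / ((n : ℝ) + 5) := by
        set b : ℝ := 4 / ((n : ℝ) + 4) with hbdef
        have hb1 : b ≤ 1 := by
          rw [hbdef, div_le_one (by linarith)]; linarith
        have hvb : v - v ^ 2 / 4 ≤ b - b ^ 2 / 4 := by nlinarith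
        have hb2 : b - b ^ 2 / 4 ≤ 4 / ((n : ℝ) + 5) := by
          have hA : (0 : ℝ) < (n : ℝ) + 4 := by linarith
          have heq : b - b ^ 2 / 4 = (4 * ((n : ℝ) + 4) - 4) / ((n : ℝ) + 4) ^ 2 := by
            rw [hbdef]; field_simp
          rw [heq, div_le_div_iff₀ (by positivity) (by linarith)]
          nlinarith
        linarith
      have hcast : ((n + 1 : ℕ) : ℝ) + 4 = (n : ℝ) + 5 := by push_cast; ring
      rw [hcast]
      linarith


/-- For bond percolation with parameter `p ≤ 1/(d-1)` on the infinite
`d`-regular rooted tree (`d ≥ 3`), the probability that percolation reaches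
level `k` satisfies `P(L_k ≠ ∅) ≤ 6/k` for all `k ≥ 1`. -/
theorem prob_level_nonempty_le (d k : ℕ) (hd : 3 ≤ d) (hk : 1 ≤ k)
    (p : ℝ) (hp0 : 0 ≤ p) (hp : p ≤ 1 / ((d : ℝ) - 1)) :
    probLevelNonempty d k p ≤ 6 / k := by
  obtain ⟨k', rfl⟩ : ∃ k', k = k' + 1 := ⟨k - 1, by omega⟩
  have hm1 : 1 ≤ d - 1 := by omega
  have hm2 : 2 ≤ d - 1 := by omega
  have hcast : ((d - 1 : ℕ) : ℝ) = (d : ℝ) - 1 := by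
    have h1 : (1 : ℕ) ≤ d := by omega
    push_cast [Nat.cast_sub h1]
    ring
  have hpm : p ≤ 1 / ((d - 1 : ℕ) : ℝ) := by rw [hcast]; exact hp
  have heq : probLevelNonempty d (k' + 1) p = pr p (ConnG d (d - 1) (k' + 1)) := by
    unfold probLevelNonempty pr
    refine Fintype.sum_equiv (Equiv.refl _) _ _ fun ω => ?_
    simp only [Equiv.refl_apply]
    by_cases h : ∃ a f, ConnectedAtLevel d (k' + 1) ω a f
    · rw [if_pos h]; refine Eq.trans ?_ (if_pos (show ConnG d (d - 1) (k' + 1) ω from h)).symm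
      exact Fintype.prod_equiv (Equiv.refl _) _ _ fun e => rfl
    · rw [if_neg h]; exact (if_neg (show ¬ ConnG d (d - 1) (k' + 1) ω from fun hc => h hc)).symm
  rw [heq, pr_conn_succ d (d - 1) k' hm1 p, pr_conn_eq_V (d - 1) hm1 p k']
  obtain ⟨hV0, hV1, hV4⟩ := V_bounds (d - 1) hm2 p hp0 hpm k'
  set v := V (d - 1) p k' with hvdef
  have hd3 : (3 : ℝ) ≤ (d : ℝ) := by exact_mod_cast hd
  have hN : (0 : ℝ) ≤ (k' : ℝ) := Nat.cast_nonneg k'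
  have hpv0 : 0 ≤ p * v := mul_nonneg hp0 hV0
  have hpv1 : p * v ≤ 1 := by
    have h2 : p * v ≤ (1 / ((d : ℝ) - 1)) * 1 := by
      have hpos : (0 : ℝ) ≤ 1 / ((d : ℝ) - 1) := by
        apply le_of_lt
        apply div_pos <;> linarith
      apply mul_le_mul hp hV1 hV0 hpos
    have h3 : (1 : ℝ) / ((d : ℝ) - 1) ≤ 1 := by
      rw [div_le_one (by linarith)]; linarith
    linarith
  have hbern : 1 - (d : ℝ) * (p * v) ≤ (1 - p * v) ^ d := by
    have hB := one_add_mul_le_pow (a := -(p * v)) (by linarith) d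
    have e1 : (1 : ℝ) + -(p * v) = 1 - p * v := by ring
    have e2 : (1 : ℝ) + (d : ℝ) * (-(p * v)) = 1 - (d : ℝ) * (p * v) := by ring
    rw [e1, e2] at hB
    exact hB
  have hstep1 : 1 - (1 - p * v) ^ d ≤ (d : ℝ) * (p * v) := by linarith
  have hstep2 : (d : ℝ) * (p * v) ≤ (d : ℝ) * ((1 / ((d : ℝ) - 1)) * (4 / ((k' : ℝ) + 4))) := by
    apply mul_le_mul_of_nonneg_left _ (by linarith)
    have hpos : (0 : ℝ) ≤ 1 / ((d : ℝ) - 1) := by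
      apply le_of_lt
      apply div_pos <;> linarith
    exact mul_le_mul hp hV4 hV0 hpos
  have hstep3 : (d : ℝ) * ((1 / ((d : ℝ) - 1)) * (4 / ((k' : ℝ) + 4))) ≤ 6 / ((k' : ℝ) + 1) := by
    have hfrac : (d : ℝ) * ((1 / ((d : ℝ) - 1)) * (4 / ((k' : ℝ) + 4)))
        = (4 * (d : ℝ)) / (((d : ℝ) - 1) * ((k' : ℝ) + 4)) := by
      field_simp
    rw [hfrac, div_le_div_iff₀ (mul_pos (by linarith) (by linarith)) (by linarith)]
    nlinarith [mul_nonneg (by linarith : (0 : ℝ) ≤ (d : ℝ) - 3) hN]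
  have hcast2 : ((k' + 1 : ℕ) : ℝ) = (k' : ℝ) + 1 := by push_cast; ring
  rw [hcast2]
  linarith
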